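/- arXiv:2005.03414 — 2 statements merged into one kernel-verified Lean document; each statement's English description precedes it below -/
import Mathlib

section
/- Let H be a module over ℤ and let a, b, c, d ∈ H satisfy a + b + c + d = 0. Then in ⋀²H ⊗ ⋀²H the identity (b∧c)⊗(b∧c) + (d∧a)⊗(d∧a) − (a∧b)⊗(a∧b) − (c∧d)⊗(c∧d) = (a∧c)⊗(b∧d) + (b∧d)⊗(a∧c) holds. -/
open scoped TensorProduct

/-- The wedge product `x ∧ y` as an element of the second exterior power `⋀²H`. -/
noncomputable def wedge {H : Type*} [AddCommGroup H] [Module ℤ H] (x y : H) : ⋀[ℤ]^2 H :=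
  ⟨ExteriorAlgebra.ιMulti ℤ 2 ![x, y],
    ExteriorAlgebra.ιMulti_range ℤ 2 (Set.mem_range_self _)⟩

section aux
variable {H : Type*} [AddCommGroup H] [Module ℤ H]

lemma wedge_coe (x y : H) :
    (wedge x y : ExteriorAlgebra ℤ H) = ExteriorAlgebra.ι ℤ x * ExteriorAlgebra.ι ℤ y := by
  simp [wedge, ExteriorAlgebra.ιMulti_apply, List.ofFn_succ]

lemma wedge_add_left (x x' y : H) : wedge (x + x') y = wedge x y + wedge x' y := by
  ext; simp [wedge_coe, add_mul]

lemma wedge_add_right (x y y' : H) : wedge x (y + y') = wedge x y + wedge x y' := by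
  ext; simp [wedge_coe, mul_add]

lemma wedge_self (x : H) : wedge x x = 0 := by
  ext; simp [wedge_coe, ExteriorAlgebra.ι_sq_zero]

lemma wedge_neg_left (x y : H) : wedge (-x) y = - wedge x y := by
  ext; simp [wedge_coe]

lemma wedge_neg_right (x y : H) : wedge x (-y) = - wedge x y := by
  ext; simp [wedge_coe]

lemma wedge_antisymm (x y : H) : wedge x y = - wedge y x := by
  have h := wedge_self (x + y)
  rw [wedge_add_left, wedge_add_right, wedge_add_right, wedge_self, wedge_self] at h
  have h' : wedge x y + wedge y x = 0 := by
    have := h; abel_nf at this; abel_nf; exact this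
  exact eq_neg_of_add_eq_zero_left h'

end aux

/-- If `a + b + c + d = 0` in a `ℤ`-module `H`, then in `⋀²H ⊗ ⋀²H` one has
`(b∧c)⊗(b∧c) + (d∧a)⊗(d∧a) − (a∧b)⊗(a∧b) − (c∧d)⊗(c∧d) = (a∧c)⊗(b∧d) + (b∧d)⊗(a∧c)`. -/
theorem flip_identity {H : Type*} [AddCommGroup H] [Module ℤ H] (a b c d : H)
    (h : a + b + c + d = 0) :
    (wedge b c ⊗ₜ[ℤ] wedge b c + wedge d a ⊗ₜ[ℤ] wedge d a
      - wedge a b ⊗ₜ[ℤ] wedge a b - wedge c d ⊗ₜ[ℤ] wedge c d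
      : (⋀[ℤ]^2 H) ⊗[ℤ] (⋀[ℤ]^2 H)) =
    wedge a c ⊗ₜ[ℤ] wedge b d + wedge b d ⊗ₜ[ℤ] wedge a c := by
  have hd : d = -(a + b + c) := by
    exact eq_neg_of_add_eq_zero_right h
  subst hd
  have hda : wedge (-(a + b + c)) a = wedge a b + wedge a c := by
    rw [wedge_neg_left, wedge_add_left, wedge_add_left, wedge_self,
      wedge_antisymm b a, wedge_antisymm c a]
    abel
  have hcd : wedge c (-(a + b + c)) = wedge a c + wedge b c := by
    rw [wedge_neg_right, wedge_add_right, wedge_add_right, wedge_self,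
      wedge_antisymm c a, wedge_antisymm c b]
    abel
  have hbd : wedge b (-(a + b + c)) = wedge a b - wedge b c := by
    rw [wedge_neg_right, wedge_add_right, wedge_add_right, wedge_self,
      wedge_antisymm b a]
    abel
  rw [hda, hcd, hbd]
  simp only [TensorProduct.tmul_add, TensorProduct.add_tmul, TensorProduct.tmul_sub,
    TensorProduct.sub_tmul]
  abel
end

section
/- Let H be a module over ℤ, let B : H × H → ℤ be an alternating ℤ-bilinear form, and for x, y ∈ H write x∧y := x⊗y − y⊗x ∈ H⊗H. Let Cont₁₃ : H⊗H⊗H⊗H → H⊗H be the ℤ-linear map determined by x⊗y⊗z⊗w ↦ B(x,z)·(y⊗w). Then for all a, b, c, d ∈ H: Cont₁₃( (a∧c)⊗(b∧d) + (b∧d)⊗(a∧c) ) = B(a,b)·(c∧d) + B(a,d)·(b∧c) + B(c,d)·(a∧b) + B(b,c)·(a∧d). -/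
open scoped TensorProduct

/-- Let `B` be an alternating `ℤ`-bilinear form on a `ℤ`-module `H`, write
`x∧y := x⊗y − y⊗x ∈ H⊗H`, and let `Cont₁₃ : (H⊗H)⊗(H⊗H) → H⊗H` be the `ℤ`-linear map
determined by `x⊗y⊗z⊗w ↦ B(x,z)·(y⊗w)`.  Then for all `a, b, c, d ∈ H`:
`Cont₁₃((a∧c)⊗(b∧d) + (b∧d)⊗(a∧c)) = B(a,b)•(c∧d) + B(a,d)•(b∧c) + B(c,d)•(a∧b) + B(b,c)•(a∧d)`. -/
theorem cont13_penner {H : Type*} [AddCommGroup H] [Module ℤ H]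
    (B : H →ₗ[ℤ] H →ₗ[ℤ] ℤ) (hB : ∀ x : H, B x x = 0)
    (Cont₁₃ : (H ⊗[ℤ] H) ⊗[ℤ] (H ⊗[ℤ] H) →ₗ[ℤ] H ⊗[ℤ] H)
    (hCont : ∀ x y z w : H, Cont₁₃ ((x ⊗ₜ[ℤ] y) ⊗ₜ[ℤ] (z ⊗ₜ[ℤ] w)) = B x z • (y ⊗ₜ[ℤ] w))
    (a b c d : H) :
    Cont₁₃ ((a ⊗ₜ[ℤ] c - c ⊗ₜ[ℤ] a) ⊗ₜ[ℤ] (b ⊗ₜ[ℤ] d - d ⊗ₜ[ℤ] b)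
        + (b ⊗ₜ[ℤ] d - d ⊗ₜ[ℤ] b) ⊗ₜ[ℤ] (a ⊗ₜ[ℤ] c - c ⊗ₜ[ℤ] a)) =
      B a b • (c ⊗ₜ[ℤ] d - d ⊗ₜ[ℤ] c) + B a d • (b ⊗ₜ[ℤ] c - c ⊗ₜ[ℤ] b)
        + B c d • (a ⊗ₜ[ℤ] b - b ⊗ₜ[ℤ] a) + B b c • (a ⊗ₜ[ℤ] d - d ⊗ₜ[ℤ] a) := by
  have skew : ∀ x y : H, B y x = - B x y := by
    intro x y
    have h := hB (x + y)
    simp [map_add, hB] at h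
    linarith
  simp only [TensorProduct.sub_tmul, TensorProduct.tmul_sub, map_add, map_sub, hCont,
    skew a b, skew a d, skew b c, skew c d, neg_smul]

  module
end
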